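/- arXiv:2303.06581 — 3 statements merged into one kernel-verified Lean document; each statement's English description precedes it below -/
import Mathlib

section
/- Let 0 < r < n and let r' = n mod r. The Jordan type of the nilpotent matrix N_r (i.e., the multiset of sizes of its Jordan blocks) is the partition of n consisting of r' parts equal to ⌈n/r⌉ and r − r' parts equal to ⌊n/r⌋. -/
/-!
Powers of `N_r` are again shift matrices, `N_r ^ k = N_{kr}`, and the Gram matrix of `N_m` is the
diagonal projection onto the first `n - m` coordinates, so `rank N_m = n - m`. Hence
`rank N_r^(k-1) - rank N_r^k = min r (n - (k-1) r)`, which is exactly the number of parts `≥ k`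
of the partition with `n % r` parts `n / r + 1` and `r - n % r` parts `n / r`.
-/

/-- The n×n complex matrix with ones on the r-th subdiagonal. -/
def Nr (n r : ℕ) : Matrix (Fin n) (Fin n) ℂ :=
  Matrix.of fun i j => if (i : ℕ) = (j : ℕ) + r then 1 else 0

/-- The partition with `n % r` parts equal to `⌈n/r⌉` and `r - n % r` parts equal to `⌊n/r⌋`. -/
def muR (n r : ℕ) : Multiset ℕ :=
  Multiset.replicate (n % r) (n / r + 1) + Multiset.replicate (r - n % r) (n / r)

/-- `A` is nilpotent with Jordan type `lam`: the number of Jordan blocks of size at least `k`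
equals `rank A^(k-1) - rank A^k`. -/
def JordanType {n : ℕ} (A : Matrix (Fin n) (Fin n) ℂ) (lam : Multiset ℕ) : Prop :=
  IsNilpotent A ∧ (∀ x ∈ lam, 0 < x) ∧ lam.sum = n ∧
    ∀ k : ℕ, 1 ≤ k →
      (lam.filter (fun x => k ≤ x)).card = (A ^ (k - 1)).rank - (A ^ k).rank

/-- Sum of the `j` largest parts of `lam`. -/
def dSum (lam : Multiset ℕ) (j : ℕ) : ℕ :=
  (((lam.sort (· ≤ ·)).reverse).take j).sum

/-- Dominance order on partitions (as multisets of parts). -/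
def Dominates (lam mu : Multiset ℕ) : Prop :=
  lam.card ≤ mu.card ∧ ∀ j, dSum mu j ≤ dSum lam j

open Matrix

lemma Fin.sum_ite_val_eq {M : Type*} [AddCommMonoid M] {n : ℕ} (a : ℕ) (f : Fin n → M) :
    ∑ l : Fin n, (if (l : ℕ) = a then f l else 0) = if h : a < n then f ⟨a, h⟩ else 0 := by
  split_ifs with h
  · simp_rw [← Fin.ext_iff (b := ⟨a, h⟩), Finset.sum_ite_eq', Finset.mem_univ, if_true]
  · exact Finset.sum_eq_zero fun l _ => if_neg (by omega)

section ShiftMatrix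

variable {n : ℕ}

lemma Nr_zero : Nr n 0 = 1 := by
  ext i j
  simp [Nr, Matrix.one_apply, Fin.ext_iff]

lemma Nr_mul (a b : ℕ) : Nr n a * Nr n b = Nr n (a + b) := by
  ext i j
  simp only [Nr, Matrix.mul_apply, Matrix.of_apply, mul_ite, mul_one, mul_zero,
    Fin.sum_ite_val_eq]
  split_ifs <;> first | rfl | omega

lemma Nr_pow (r k : ℕ) : Nr n r ^ k = Nr n (k * r) := by
  induction k with
  | zero => rw [pow_zero, zero_mul, Nr_zero]
  | succ k ih => rw [pow_succ, ih, Nr_mul, add_one_mul]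

lemma Nr_eq_zero_of_le {m : ℕ} (h : n ≤ m) : Nr n m = 0 := by
  ext i j
  simp only [Nr, Matrix.of_apply, Matrix.zero_apply]
  exact if_neg (by omega)

lemma isNilpotent_Nr {r : ℕ} (hr : 0 < r) : IsNilpotent (Nr n r) :=
  ⟨n, by rw [Nr_pow, Nr_eq_zero_of_le (Nat.le_mul_of_pos_right n hr)]⟩

lemma conjTranspose_Nr_mul_Nr (m : ℕ) :
    (Nr n m)ᴴ * Nr n m = diagonal fun j : Fin n => if (j : ℕ) + m < n then (1 : ℂ) else 0 := by
  ext j j'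
  simp only [Nr, Matrix.mul_apply, Matrix.conjTranspose_apply, Matrix.of_apply,
    Matrix.diagonal_apply, apply_ite (star : ℂ → ℂ), star_one, star_zero, ite_mul, one_mul,
    zero_mul, Fin.sum_ite_val_eq, Fin.ext_iff]
  split_ifs <;> first | rfl | omega

open ComplexOrder in
lemma rank_Nr (m : ℕ) : (Nr n m).rank = n - m := by
  rw [← rank_conjTranspose_mul_self, conjTranspose_Nr_mul_Nr, rank_diagonal]
  simp only [ne_eq, ite_eq_right_iff, one_ne_zero, imp_false, not_not]
  simp_rw [Fintype.card_subtype, ← Nat.lt_sub_iff_add_lt, Fin.card_filter_val_lt]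
  omega

end ShiftMatrix

lemma Multiset.card_filter_le_replicate (c a k : ℕ) :
    ((Multiset.replicate c a).filter (k ≤ ·)).card = if k ≤ a then c else 0 := by
  split_ifs with h
  · rw [Multiset.filter_eq_self.mpr fun x hx => Multiset.eq_of_mem_replicate hx ▸ h,
      Multiset.card_replicate]
  · rw [Multiset.filter_eq_nil.mpr fun x hx => Multiset.eq_of_mem_replicate hx ▸ h,
      Multiset.card_zero]

lemma pos_of_mem_muR {n r : ℕ} (h : r ≤ n) : ∀ x ∈ muR n r, 0 < x := by
  intro x hx
  simp only [muR, Multiset.mem_add, Multiset.mem_replicate] at hx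
  rcases hx with ⟨-, rfl⟩ | ⟨hne, rfl⟩
  · exact Nat.succ_pos _
  · exact Nat.div_pos h (by omega)

lemma sum_muR (n r : ℕ) : (muR n r).sum = n := by
  simp only [muR, Multiset.sum_add, Multiset.sum_replicate, smul_eq_mul]
  rcases Nat.eq_zero_or_pos r with rfl | hr
  · simp
  have hdiv := Nat.div_add_mod' n r
  zify [(Nat.mod_lt n hr).le] at hdiv ⊢
  linear_combination hdiv

lemma card_filter_succ_le_muR {n r : ℕ} (hr : 0 < r) (k : ℕ) :
    ((muR n r).filter (k + 1 ≤ ·)).card = min r (n - k * r) := by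
  simp only [muR, Multiset.filter_add, Multiset.card_add, Multiset.card_filter_le_replicate]
  have hmod : n % r < r := Nat.mod_lt n hr
  have hdiv : n / r * r + n % r = n := Nat.div_add_mod' n r
  rcases lt_trichotomy k (n / r) with hk | rfl | hk
  · have : (k + 1) * r ≤ n / r * r := Nat.mul_le_mul_right r hk
    rw [add_one_mul] at this
    rw [if_pos (by omega), if_pos (by omega)]
    omega
  · rw [if_pos le_rfl, if_neg (by omega)]
    omega
  · have : (n / r + 1) * r ≤ k * r := Nat.mul_le_mul_right r hk
    rw [add_one_mul] at this
    rw [if_neg (by omega), if_neg (by omega)]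
    omega

theorem jordanType_Nr_general (n r : ℕ) (hr : 0 < r) (hrn : r < n) :
    JordanType (Nr n r) (muR n r) := by
  refine ⟨isNilpotent_Nr hr, pos_of_mem_muR hrn.le, sum_muR n r, fun k hk => ?_⟩
  obtain ⟨k, rfl⟩ := Nat.exists_eq_add_of_le' hk
  rw [card_filter_succ_le_muR hr, Nr_pow, Nr_pow, rank_Nr, rank_Nr, Nat.add_sub_cancel,
    add_one_mul]
  omega

theorem jordanType_Nr (n r : ℕ) (hr : 0 < r) (hrn : r < n) (r' : ℕ) (hr' : r' = n % r) :
    JordanType (Nr n r) (muR n r) :=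
  jordanType_Nr_general n r hr hrn
end

section
/- Let 0 < r < n, let r' = n mod r, and let μ_r be the partition of n with r' parts equal to ⌈n/r⌉ and r − r' parts equal to ⌊n/r⌋. A partition λ of n dominates μ_r (in the dominance order) if and only if λ has at most r parts. -/
private lemma sort_sum (m : Multiset ℕ) : (m.sort (· ≤ ·)).sum = m.sum := by
  conv_rhs => rw [← Multiset.sort_eq m (· ≤ ·)]
  exact (Multiset.sum_coe _)

private lemma dSum_le_sum (m : Multiset ℕ) (j : ℕ) : dSum m j ≤ m.sum := by
  rw [dSum]
  set L := (m.sort (· ≤ ·)).reverse with hL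
  calc (L.take j).sum ≤ (L.take j).sum + (L.drop j).sum := Nat.le_add_right _ _
    _ = L.sum := by rw [← List.sum_append, List.take_append_drop]
    _ = m.sum := by rw [hL, List.sum_reverse, sort_sum]

private lemma muR_sort (n r : ℕ) :
    ((muR n r).sort (· ≤ ·)).reverse
      = List.replicate (n % r) (n / r + 1) ++ List.replicate (r - n % r) (n / r) := by
  have h1 : (muR n r).sort (· ≤ ·)
      = List.replicate (r - n % r) (n / r) ++ List.replicate (n % r) (n / r + 1) := by
    refine (fun hp h1 h2 => List.Perm.eq_of_pairwise' (r := (· ≤ ·)) h1 h2 hp) ?_ ?_ ?_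
    · rw [← Multiset.coe_eq_coe, Multiset.sort_eq, muR,
        ← Multiset.coe_replicate, ← Multiset.coe_replicate]
      exact add_comm _ _
    · exact Multiset.pairwise_sort _ _
    · rw [List.pairwise_append]
      refine ⟨?_, ?_, ?_⟩
      · exact List.pairwise_replicate.mpr (Or.inr le_rfl)
      · exact List.pairwise_replicate.mpr (Or.inr le_rfl)
      · intro a ha b hb
        rw [List.mem_replicate] at ha hb
        omega
  rw [h1, List.reverse_append, List.reverse_replicate, List.reverse_replicate]

private lemma dSum_muR (n r : ℕ) (j : ℕ) :
    dSum (muR n r) j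
      = min j (n % r) * (n / r + 1) + min (j - n % r) (r - n % r) * (n / r) := by
  rw [dSum, muR_sort n r, List.take_append, List.sum_append]
  simp [List.take_replicate, List.sum_replicate, smul_eq_mul]

private lemma dSum_muR_le (n r : ℕ) (j : ℕ) :
    dSum (muR n r) j ≤ j * (n / r) + min j (n % r) := by
  rw [dSum_muR]
  rcases le_total j (n % r) with h | h
  · have h0 : j - n % r = 0 := by omega
    rw [h0, min_eq_left h]
    simp [Nat.mul_succ]
  · rw [min_eq_right h]
    obtain ⟨a, rfl⟩ : ∃ a, j = n % r + a := ⟨j - n % r, by omega⟩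
    have ha : n % r + a - n % r = a := by omega
    rw [ha]
    have h1 : min a (r - n % r) * (n / r) ≤ a * (n / r) :=
      Nat.mul_le_mul_right _ (min_le_left _ _)
    have e1 : (n % r + a) * (n / r) = n % r * (n / r) + a * (n / r) := Nat.add_mul _ _ _
    have e2 : n % r * (n / r + 1) = n % r * (n / r) + n % r := Nat.mul_succ _ _
    linarith

private lemma muR_sum (n r : ℕ) (hr : 0 < r) (hrn : r < n) : (muR n r).sum = n := by
  simp only [muR, Multiset.sum_add, Multiset.sum_replicate, smul_eq_mul]
  have hmod : n % r < r := Nat.mod_lt _ hr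
  obtain ⟨a, ha⟩ : ∃ a, r = n % r + a := ⟨r - n % r, by omega⟩
  have hra : r - n % r = a := by omega
  have e3 : r * (n / r) + n % r = n := Nat.div_add_mod n r
  have e2 : n % r * (n / r) + a * (n / r) = r * (n / r) := by
    rw [← Nat.add_mul, ← ha]
  have e1 : n % r * (n / r + 1) = n % r * (n / r) + n % r := Nat.mul_succ _ _
  rw [hra]
  linarith

theorem dominates_muR_iff (n r : ℕ) (hr : 0 < r) (hrn : r < n) (lam : Nat.Partition n) :
    Dominates lam.parts (muR n r) ↔ lam.parts.card ≤ r := by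
  have hmod : n % r < r := Nat.mod_lt _ hr
  have hcard : Multiset.card (muR n r) = r := by
    simp [muR]; omega
  constructor
  · intro h
    rw [← hcard]
    exact h.1
  · intro hc
    refine ⟨by rw [hcard]; exact hc, fun j => ?_⟩
    set L := (lam.parts.sort (· ≤ ·)).reverse with hLdef
    have hlen : L.length = Multiset.card lam.parts := by
      rw [hLdef, List.length_reverse, Multiset.length_sort]
    have hLsum : L.sum = n := by
      rw [hLdef, List.sum_reverse, sort_sum, lam.parts_sum]
    have hsort : List.Pairwise (· ≥ ·) L := by
      have := Multiset.pairwise_sort lam.parts (· ≤ ·)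
      rw [hLdef, List.pairwise_reverse]
      exact this
    rcases le_or_gt (Multiset.card lam.parts) j with hj | hj
    · -- dSum lam j = n
      have : dSum lam.parts j = n := by
        rw [dSum, ← hLdef, List.take_of_length_le (by omega), hLsum]
      rw [this]
      calc dSum (muR n r) j ≤ (muR n r).sum := dSum_le_sum _ _
        _ = n := muR_sum n r hr hrn
    · -- j < card ≤ r
      have hjL : j < L.length := by omega
      set x := L.get ⟨j, hjL⟩ with hx
      have h1 : ∀ y ∈ L.take j, x ≤ y := by
        intro y hy
        rw [List.mem_take_iff_getElem] at hy
        obtain ⟨i, hi, rfl⟩ := hy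
        have hij : i < j := lt_of_lt_of_le hi (min_le_left _ _)
        have := hsort.rel_get_of_lt (a := ⟨i, by omega⟩) (b := ⟨j, hjL⟩) hij
        simpa [hx] using this
      have h2 : ∀ y ∈ L.drop j, y ≤ x := by
        intro y hy
        rw [List.mem_drop_iff_getElem] at hy
        obtain ⟨i, hi, rfl⟩ := hy
        rcases Nat.eq_zero_or_pos i with rfl | hipos
        · simp [hx]
        · have := hsort.rel_get_of_lt (a := ⟨j, hjL⟩) (b := ⟨j + i, by omega⟩)
            (by simp; omega)
          simpa [hx] using this
      have htake : j * x ≤ (L.take j).sum := by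
        have := List.card_nsmul_le_sum (L.take j) x h1
        rwa [List.length_take, smul_eq_mul, min_eq_left (by omega : j ≤ L.length)] at this
      have hdrop : (L.drop j).sum ≤ (L.length - j) * x := by
        have := List.sum_le_card_nsmul (L.drop j) x h2
        rwa [List.length_drop, smul_eq_mul] at this
      have hsplit : (L.take j).sum + (L.drop j).sum = n := by
        rw [← List.sum_append, List.take_append_drop, hLsum]
      have hgoal : j * (n / r) + min j (n % r) ≤ (L.take j).sum := by
        rcases le_or_gt x (n / r) with hxq | hxq
        · have hd : (L.drop j).sum ≤ (r - j) * (n / r) :=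
            le_trans hdrop (Nat.mul_le_mul (by omega) hxq)
          have e3 : r * (n / r) + n % r = n := Nat.div_add_mod n r
          have e2 : r * (n / r) = j * (n / r) + (r - j) * (n / r) := by
            rw [← Nat.add_mul]; congr 1; omega
          have hm : min j (n % r) ≤ n % r := min_le_right _ _
          linarith
        · have h1' : j * (n / r + 1) ≤ j * x := Nat.mul_le_mul_left _ hxq
          have e : j * (n / r + 1) = j * (n / r) + j := Nat.mul_succ _ _
          have hm : min j (n % r) ≤ j := min_le_left _ _
          linarith
      calc dSum (muR n r) j ≤ j * (n / r) + min j (n % r) := dSum_muR_le n r j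
        _ ≤ (L.take j).sum := hgoal
        _ = dSum lam.parts j := by rw [dSum, ← hLdef]
end

section
/- Let G be a properly downward graph on n vertices: G is downward, every vertex v with y(v) > 1 has an arrow to the vertex directly below it (same position, level y(v) − 1), and every arrow dropping exactly one level goes weakly right. Then the multiset of column heights {max{y(v) : x(v) = i} : i a position occurring in G} is a partition of n, and the matrix of G is nilpotent with Jordan type equal to this partition. -/
/-- The multiset of column heights of a graph embedded via `x`, `y`. -/
def colHeights (n : ℕ) (x y : Fin n → ℕ) : Multiset ℕ :=
  (Finset.univ.image x).val.map fun i => (Finset.univ.filter fun v => x v = i).sup y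



lemma lemU {n : ℕ} (x y : Fin n → ℕ)
    (E : Fin n → Fin n → Prop) (ord : Fin n ≃ Fin n) (A : Matrix (Fin n) (Fin n) ℂ)
    (hA2 : ∀ v u, ¬ E v u → A (ord u) (ord v) = 0)
    (hdown : ∀ v u, E v u → y u < y v)
    (hright : ∀ v u, E v u → y v = y u + 1 → x v ≤ x u) :
    ∀ k u v, (A ^ k) (ord u) (ord v) ≠ 0 →
      y u + k ≤ y v ∧ (y u + k = y v → x v ≤ x u) := by
  intro k
  induction k with
  | zero =>
    intro u v h
    rw [pow_zero] at h
    have huv : ord u = ord v := by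
      by_contra hne
      exact h (Matrix.one_apply_ne hne)
    have : u = v := ord.injective huv
    subst this
    simp
  | succ k ih =>
    intro u v h
    rw [pow_succ, Matrix.mul_apply] at h
    obtain ⟨j, -, hj⟩ := Finset.exists_ne_zero_of_sum_ne_zero h
    set m := ord.symm j with hm
    have hjm : j = ord m := (ord.apply_symm_apply j).symm
    rw [hjm] at hj
    have h1 : (A ^ k) (ord u) (ord m) ≠ 0 := left_ne_zero_of_mul hj
    have h2 : A (ord m) (ord v) ≠ 0 := right_ne_zero_of_mul hj
    have hE : E v m := by
      by_contra hc
      exact h2 (hA2 v m hc)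
    have hym : y m < y v := hdown v m hE
    obtain ⟨hle, heq⟩ := ih u m h1
    refine ⟨by omega, fun he => ?_⟩
    have hym' : y m = y u + k := by omega
    exact le_trans (hright v m hE (by omega)) (heq hym'.symm)

lemma lemD {n : ℕ} (x y : Fin n → ℕ)
    (hinj : Function.Injective fun v => (x v, y v))
    (E : Fin n → Fin n → Prop)
    (w : Fin n → Fin n → ℂ) (hw : ∀ v u, E v u → w v u ≠ 0)
    (ord : Fin n ≃ Fin n) (A : Matrix (Fin n) (Fin n) ℂ)
    (hA1 : ∀ v u, E v u → A (ord u) (ord v) = w v u)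
    (hA2 : ∀ v u, ¬ E v u → A (ord u) (ord v) = 0)
    (hdown : ∀ v u, E v u → y u < y v)
    (hbelow : ∀ v, 1 < y v → ∃ u, x u = x v ∧ y u = y v - 1 ∧ E v u)
    (hright : ∀ v u, E v u → y v = y u + 1 → x v ≤ x u) :
    ∀ k v, k < y v → ∃ b, x b = x v ∧ y b + k = y v ∧ (A ^ k) (ord b) (ord v) ≠ 0 := by
  intro k
  induction k with
  | zero =>
    intro v hv
    refine ⟨v, rfl, by omega, ?_⟩
    rw [pow_zero, Matrix.one_apply_eq]
    exact one_ne_zero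
  | succ k ih =>
    intro v hv
    obtain ⟨u, hux, huy, hE⟩ := hbelow v (by omega)
    obtain ⟨b, hbx, hby, hbA⟩ := ih u (by omega)
    refine ⟨b, by rw [hbx, hux], by omega, ?_⟩
    rw [pow_succ, Matrix.mul_apply]
    rw [Finset.sum_eq_single (ord u)]
    · rw [hA1 v u hE]
      exact mul_ne_zero hbA (hw v u hE)
    · intro j _ hne
      by_contra hj
      set m := ord.symm j with hm
      have hjm : j = ord m := (ord.apply_symm_apply j).symm
      rw [hjm] at hj hne
      have h1 : (A ^ k) (ord b) (ord m) ≠ 0 := left_ne_zero_of_mul hj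
      have h2 : A (ord m) (ord v) ≠ 0 := right_ne_zero_of_mul hj
      have hEm : E v m := by
        by_contra hc
        exact h2 (hA2 v m hc)
      have hym : y m < y v := hdown v m hEm
      obtain ⟨hle, heq⟩ := lemU x y E ord A hA2 hdown hright k b m h1
      have hyme : y b + k = y m := by omega
      have hxm : x m ≤ x b := heq hyme
      have hxv : x v ≤ x m := hright v m hEm (by omega)
      have hmu : m = u := by
        apply hinj
        have : x m = x u := by omega
        simp only [Prod.mk.injEq]
        exact ⟨this, by omega⟩
      exact hne (by rw [hmu])
    · intro hmem
      exact absurd (Finset.mem_univ _) hmem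

lemma rank_pow {n : ℕ} (x y : Fin n → ℕ) (hy : ∀ v, 0 < y v)
    (hinj : Function.Injective fun v => (x v, y v))
    (E : Fin n → Fin n → Prop)
    (w : Fin n → Fin n → ℂ) (hw : ∀ v u, E v u → w v u ≠ 0)
    (ord : Fin n ≃ Fin n) (A : Matrix (Fin n) (Fin n) ℂ)
    (hA1 : ∀ v u, E v u → A (ord u) (ord v) = w v u)
    (hA2 : ∀ v u, ¬ E v u → A (ord u) (ord v) = 0)
    (hdown : ∀ v u, E v u → y u < y v)
    (hbelow : ∀ v, 1 < y v → ∃ u, x u = x v ∧ y u = y v - 1 ∧ E v u)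
    (hright : ∀ v u, E v u → y v = y u + 1 → x v ≤ x u)
    (k : ℕ) :
    (A ^ k).rank = (Finset.univ.filter fun v => k < y v).card := by
  apply le_antisymm
  · -- upper bound
    set d : Fin n → ℂ := fun j => if k < y (ord.symm j) then 1 else 0 with hd
    have hAD : A ^ k * Matrix.diagonal d = A ^ k := by
      ext i j
      rw [Matrix.mul_diagonal]
      by_cases hc : k < y (ord.symm j)
      · simp [hd, hc]
      · have : (A ^ k) i j = 0 := by
          by_contra hne
          have hne' : (A ^ k) (ord (ord.symm i)) (ord (ord.symm j)) ≠ 0 := by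
            simpa using hne
          have := (lemU x y E ord A hA2 hdown hright k (ord.symm i) (ord.symm j) hne').1
          have := hy (ord.symm i)
          omega
        simp [this]
    calc (A ^ k).rank = (A ^ k * Matrix.diagonal d).rank := by rw [hAD]
      _ ≤ (Matrix.diagonal d).rank := Matrix.rank_mul_le_right _ _
      _ = Fintype.card {j // d j ≠ 0} := Matrix.rank_diagonal d
      _ = (Finset.univ.filter fun v => k < y v).card := by
          rw [Fintype.card_subtype]
          apply Finset.card_equiv ord.symm
          intro j
          simp only [Finset.mem_filter, Finset.mem_univ, true_and, hd]
          constructor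
          · intro h
            by_contra hc
            simp [hc] at h
          · intro h
            simp [h]
  · -- lower bound
    classical
    set f : {v : Fin n // k < y v} → (Fin n → ℂ) := fun v => (A ^ k).transpose (ord v.1) with hf
    have hli : LinearIndependent ℂ f := by
      rw [Fintype.linearIndependent_iff]
      intro g hg
      by_contra hc
      push_neg at hc
      obtain ⟨i0, hi0⟩ := hc
      set T : Finset {v : Fin n // k < y v} := Finset.univ.filter (fun i => g i ≠ 0) with hT
      have hTne : T.Nonempty := ⟨i0, by simp [hT, hi0]⟩
      set M := T.sup (fun i => y i.1) with hM
      obtain ⟨v0, hv0T, hv0⟩ := Finset.exists_mem_eq_sup T hTne (fun i => y i.1)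
      set T2 : Finset {v : Fin n // k < y v} := T.filter (fun i => y i.1 = M) with hT2
      have hT2ne : T2.Nonempty := ⟨v0, by simp [hT2, hv0T, hv0.symm]; exact hM.symm⟩
      obtain ⟨v, hvT2, hvmin⟩ := T2.exists_min_image (fun i => x i.1) hT2ne
      have hvT : v ∈ T := (Finset.mem_filter.mp hvT2).1
      have hvM : y v.1 = M := (Finset.mem_filter.mp hvT2).2
      obtain ⟨b, hbx, hby, hbA⟩ := lemD x y hinj E w hw ord A hA1 hA2 hdown hbelow hright k v.1 v.2
      have hrow := congrFun hg (ord b)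
      simp only [Finset.sum_apply, Pi.smul_apply, Pi.zero_apply, smul_eq_mul, hf,
        Matrix.transpose_apply] at hrow
      rw [Finset.sum_eq_single v] at hrow
      · have hgv : g v = 0 := by
          have : (A ^ k).transpose (ord v.1) (ord b) ≠ 0 := by
            rw [Matrix.transpose_apply]; exact hbA
          exact (mul_eq_zero.mp hrow).resolve_right this
        exact (Finset.mem_filter.mp hvT).2 hgv
      · intro i _ hine
        by_cases hgi : g i = 0
        · simp [hgi]
        have hiT : i ∈ T := by simp [hT, hgi]
        have hent : (A ^ k) (ord b) (ord i.1) = 0 := by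
          by_contra hne
          obtain ⟨hle, heq⟩ := lemU x y E ord A hA2 hdown hright k b i.1 hne
          have hyi : y i.1 ≤ M := Finset.le_sup (f := fun i => y i.1) hiT
          have hyieq : y b + k = y i.1 := by omega
          have hxi : x i.1 ≤ x b := heq hyieq
          have hiT2 : i ∈ T2 := by
            simp only [hT2, Finset.mem_filter]
            exact ⟨hiT, by omega⟩
          have hxv : x v.1 ≤ x i.1 := hvmin i hiT2
          have : i.1 = v.1 := by
            apply hinj
            simp only [Prod.mk.injEq]
            constructor <;> omega
          exact hine (Subtype.ext this)
        rw [hent, mul_zero]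
      · intro h
        exact absurd (Finset.mem_univ _) h
    have h1 : Fintype.card {v : Fin n // k < y v}
        = Module.finrank ℂ (Submodule.span ℂ (Set.range f)) :=
      (finrank_span_eq_card hli).symm
    have h2 : Submodule.span ℂ (Set.range f) ≤ Submodule.span ℂ (Set.range (A ^ k).transpose) := by
      apply Submodule.span_mono
      rintro _ ⟨v, rfl⟩
      exact ⟨ord v.1, rfl⟩
    have h3 := Submodule.finrank_mono h2
    rw [Matrix.rank_eq_finrank_span_cols]
    have h4 : Submodule.span ℂ (Set.range (A ^ k).col) = Submodule.span ℂ (Set.range (A ^ k).transpose) := rfl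
    rw [h4]
    rw [Fintype.card_subtype] at h1
    omega


set_option linter.unusedSectionVars false


section Counting
variable {n : ℕ} (x y : Fin n → ℕ) (hy : ∀ v, 0 < y v)
    (hinj : Function.Injective fun v => (x v, y v))
    (hbelow' : ∀ v, 1 < y v → ∃ u, x u = x v ∧ y u = y v - 1)
include hy hinj hbelow'

lemma stack : ∀ d v j, 0 < j → y v = j + d → ∃ u, x u = x v ∧ y u = j := by
  intro d
  induction d with
  | zero => exact fun v j _ h => ⟨v, rfl, by omega⟩
  | succ d ih =>
    intro v j hj hv
    obtain ⟨u, hux, huy⟩ := hbelow' v (by omega)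
    obtain ⟨u', h1, h2⟩ := ih u j hj (by omega)
    exact ⟨u', by rw [h1, hux], h2⟩

lemma col_image (i : ℕ) (hi : i ∈ Finset.univ.image x) :
    (Finset.univ.filter fun v => x v = i).image y
      = Finset.Icc 1 ((Finset.univ.filter fun v => x v = i).sup y) := by
  have hFne : (Finset.univ.filter fun v => x v = i).Nonempty := by
    obtain ⟨v, -, hv⟩ := Finset.mem_image.mp hi
    exact ⟨v, by simp [hv]⟩
  obtain ⟨v0, hv0F, hv0⟩ := Finset.exists_mem_eq_sup _ hFne y
  ext j
  simp only [Finset.mem_image, Finset.mem_Icc, Finset.mem_filter, Finset.mem_univ, true_and]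
  constructor
  · rintro ⟨v, hv, rfl⟩
    exact ⟨hy v, Finset.le_sup (by simp [hv])⟩
  · rintro ⟨h1, h2⟩
    have hj2 : j ≤ y v0 := le_of_le_of_eq h2 hv0
    obtain ⟨u, hux, huy⟩ := stack x y hy hinj hbelow' (y v0 - j) v0 j h1 (by omega)
    have hxv0 : x v0 = i := (Finset.mem_filter.mp hv0F).2
    exact ⟨u, by rw [hux, hxv0], huy⟩

lemma col_card (i : ℕ) (hi : i ∈ Finset.univ.image x) :
    (Finset.univ.filter fun v => x v = i).card
      = (Finset.univ.filter fun v => x v = i).sup y := by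
  have hyinj : Set.InjOn y (Finset.univ.filter fun v => x v = i) := by
    intro a ha b hb hab
    simp only [Finset.coe_filter, Set.mem_setOf_eq, Finset.mem_univ, true_and] at ha hb
    apply hinj
    simp only [Prod.mk.injEq]
    exact ⟨by rw [ha, hb], hab⟩
  rw [← Finset.card_image_of_injOn hyinj, col_image x y hy hinj hbelow' i hi, Nat.card_Icc]
  omega

lemma heights_sum : (colHeights n x y).sum = n := by
  have h0 : (colHeights n x y).sum
      = ∑ i ∈ Finset.univ.image x, (Finset.univ.filter fun v => x v = i).sup y := rfl
  rw [h0]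
  rw [Finset.sum_congr rfl fun i hi => (col_card x y hy hinj hbelow' i hi).symm]
  rw [← Finset.card_eq_sum_card_fiberwise
    (fun v _ => Finset.mem_image_of_mem x (Finset.mem_univ v))]
  simp

lemma heights_pos : ∀ h ∈ colHeights n x y, 0 < h := by
  intro h hh
  obtain ⟨i, hi, rfl⟩ := Multiset.mem_map.mp hh
  have hi' : i ∈ Finset.univ.image x := hi
  obtain ⟨v, -, hv⟩ := Finset.mem_image.mp hi'
  calc 0 < y v := hy v
    _ ≤ _ := Finset.le_sup (by simp [hv])

lemma level_count (k : ℕ) (hk : 1 ≤ k) :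
    ((colHeights n x y).filter (fun h => k ≤ h)).card
      = (Finset.univ.filter fun v => y v = k).card := by
  have h1 : ((colHeights n x y).filter (fun h => k ≤ h)).card
      = ((Finset.univ.image x).filter
          (fun i => k ≤ (Finset.univ.filter fun v => x v = i).sup y)).card := by
    rw [colHeights, Multiset.filter_map, Multiset.card_map]
    rfl
  rw [h1]
  symm
  apply Finset.card_nbij (fun v => x v)
  · intro v hv
    have hyv : y v = k := (Finset.mem_filter.mp hv).2
    simp only [Finset.mem_coe, Finset.mem_filter]
    refine ⟨Finset.mem_image_of_mem x (Finset.mem_univ v), ?_⟩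
    calc k = y v := hyv.symm
      _ ≤ _ := Finset.le_sup (by simp)
  · intro a ha b hb hab
    simp only [Finset.coe_filter, Set.mem_setOf_eq, Finset.mem_univ, true_and] at ha hb
    have hab' : x a = x b := hab
    apply hinj
    simp only [Prod.mk.injEq]
    exact ⟨hab', by rw [ha, hb]⟩
  · intro i hi
    simp only [Finset.coe_filter, Set.mem_setOf_eq, Finset.mem_univ, true_and] at hi
    obtain ⟨himg, hsup⟩ := hi
    have hFne : (Finset.univ.filter fun v => x v = i).Nonempty := by
      obtain ⟨v, -, hv⟩ := Finset.mem_image.mp himg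
      exact ⟨v, by simp [hv]⟩
    obtain ⟨v0, hv0F, hv0⟩ := Finset.exists_mem_eq_sup _ hFne y
    have hk2 : k ≤ y v0 := le_of_le_of_eq hsup hv0
    obtain ⟨u, hux, huy⟩ := stack x y hy hinj hbelow' (y v0 - k) v0 k hk (by omega)
    have hxv0 : x v0 = i := (Finset.mem_filter.mp hv0F).2
    refine ⟨u, ?_, show x u = i by rw [hux, hxv0]⟩
    simp only [Finset.coe_filter, Set.mem_setOf_eq]
    exact ⟨Finset.mem_univ u, huy⟩

end Counting


theorem properly_downward_graph (n : ℕ) (x y : Fin n → ℕ)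
    (hx : ∀ v, 0 < x v) (hy : ∀ v, 0 < y v)
    (hinj : Function.Injective fun v => (x v, y v))
    (E : Fin n → Fin n → Prop)
    (w : Fin n → Fin n → ℂ) (hw : ∀ v u, E v u → w v u ≠ 0)
    (ord : Fin n ≃ Fin n)
    (A : Matrix (Fin n) (Fin n) ℂ)
    (hA1 : ∀ v u, E v u → A (ord u) (ord v) = w v u)
    (hA2 : ∀ v u, ¬ E v u → A (ord u) (ord v) = 0)
    (hdown : ∀ v u, E v u → y u < y v)
    (hbelow : ∀ v, 1 < y v → ∃ u, x u = x v ∧ y u = y v - 1 ∧ E v u)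
    (hright : ∀ v u, E v u → y v = y u + 1 → x v ≤ x u) :
    (colHeights n x y).sum = n ∧ (∀ h ∈ colHeights n x y, 0 < h) ∧
      JordanType A (colHeights n x y) := by
  classical
  have hbelow' : ∀ v, 1 < y v → ∃ u, x u = x v ∧ y u = y v - 1 :=
    fun v h => (hbelow v h).imp fun u hu => ⟨hu.1, hu.2.1⟩
  have hsum := heights_sum x y hy hinj hbelow'
  have hpos := heights_pos x y hy hinj hbelow'
  refine ⟨hsum, hpos, ?_, hpos, hsum, ?_⟩
  · -- nilpotent
    refine ⟨Finset.univ.sup y + 1, ?_⟩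
    ext i j
    simp only [Matrix.zero_apply]
    by_contra h
    have h' : (A ^ (Finset.univ.sup y + 1)) (ord (ord.symm i)) (ord (ord.symm j)) ≠ 0 := by
      simpa using h
    have hle := (lemU x y E ord A hA2 hdown hright _ _ _ h').1
    have h1 := hy (ord.symm i)
    have h2 : y (ord.symm j) ≤ Finset.univ.sup y := Finset.le_sup (Finset.mem_univ _)
    omega
  · -- rank condition
    intro k hk
    have hr1 := rank_pow x y hy hinj E w hw ord A hA1 hA2 hdown hbelow hright (k - 1)
    have hr2 := rank_pow x y hy hinj E w hw ord A hA1 hA2 hdown hbelow hright k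
    rw [hr1, hr2, level_count x y hy hinj hbelow' k hk]
    have hdisj : Disjoint (Finset.univ.filter fun v => y v = k)
        (Finset.univ.filter fun v => k < y v) := by
      rw [Finset.disjoint_left]
      intro a ha hb
      have h1 := (Finset.mem_filter.mp ha).2
      have h2 := (Finset.mem_filter.mp hb).2
      omega
    have hsplit : (Finset.univ.filter fun v => k - 1 < y v).card
        = (Finset.univ.filter fun v => y v = k).card
          + (Finset.univ.filter fun v => k < y v).card := by
      rw [← Finset.card_union_of_disjoint hdisj]
      congr 1
      ext v
      simp only [Finset.mem_filter, Finset.mem_univ, true_and, Finset.mem_union]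
      omega
    omega
end
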